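/- If k is a universal kernel on a compact metric space K and l is a universal kernel on a compact metric space Θ, then the product kernel m((x, θ), (x', θ')) = k(x, x')·l(θ, θ') is a universal kernel on K × Θ; that is, the linear span of functions (x, θ) ↦ m((x, θ), (x₀, θ₀)) is dense in C(K × Θ) with the uniform norm. -/
import Mathlib


/-- A kernel on a compact space is universal if its sections are continuous and
the span of `{m(·, s₀) : s₀ ∈ S}` is dense in `C(S, ℝ)` with the sup norm. -/
def IsUniversalKernel {S : Type*} [TopologicalSpace S] [CompactSpace S]
    (m : S → S → ℝ) : Prop :=
  (∀ s₀ : S, Continuous fun s => m s s₀) ∧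
  Dense (↑(Submodule.span ℝ {f : C(S, ℝ) | ∃ s₀ : S, ∀ s, f s = m s s₀}) :
    Set C(S, ℝ))

/-- the product of universal (continuous) kernels on compact metric
spaces is a universal kernel on the product space. -/
theorem stmt_4 {K Θ : Type*} [MetricSpace K] [CompactSpace K]
    [MetricSpace Θ] [CompactSpace Θ]
    (k : K → K → ℝ) (l : Θ → Θ → ℝ)
    (hkc : Continuous fun p : K × K => k p.1 p.2)
    (hlc : Continuous fun p : Θ × Θ => l p.1 p.2)
    (hk : IsUniversalKernel k) (hl : IsUniversalKernel l) :
    IsUniversalKernel (fun v w : K × Θ => k v.1 w.1 * l v.2 w.2) := by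
  obtain ⟨-, hkd⟩ := hk
  obtain ⟨-, hld⟩ := hl
  constructor
  · rintro ⟨x₀, θ₀⟩
    exact (hkc.comp (continuous_fst.prodMk continuous_const)).mul
      (hlc.comp (continuous_snd.prodMk continuous_const))
  · set fstCM : C(K × Θ, K) := ⟨Prod.fst, continuous_fst⟩
    set sndCM : C(K × Θ, Θ) := ⟨Prod.snd, continuous_snd⟩
    set M := Submodule.span ℝ {f : C(K × Θ, ℝ) |
      ∃ w₀ : K × Θ, ∀ v, f v = k v.1 w₀.1 * l v.2 w₀.2} with hM
    set B : C(K, ℝ) → C(Θ, ℝ) → C(K × Θ, ℝ) :=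
      fun f g => f.comp fstCM * g.comp sndCM with hB
    have hBcont : Continuous fun p : C(K, ℝ) × C(Θ, ℝ) => B p.1 p.2 := by
      exact ((ContinuousMap.continuous_precomp fstCM).comp continuous_fst).mul
        ((ContinuousMap.continuous_precomp sndCM).comp continuous_snd)
    -- products of span elements lie in M
    have hspan : ∀ f ∈ Submodule.span ℝ {f : C(K, ℝ) | ∃ x₀, ∀ x, f x = k x x₀},
        ∀ g ∈ Submodule.span ℝ {g : C(Θ, ℝ) | ∃ θ₀, ∀ θ, g θ = l θ θ₀},
        B f g ∈ M := by
      intro f hf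
      induction hf using Submodule.span_induction with
      | mem f hf =>
        intro g hg
        induction hg using Submodule.span_induction with
        | mem g hg =>
          obtain ⟨x₀, hfx⟩ := hf
          obtain ⟨θ₀, hgθ⟩ := hg
          apply Submodule.subset_span
          exact ⟨(x₀, θ₀), fun v => by simp [hB, fstCM, sndCM, hfx, hgθ]⟩
        | zero => simpa [hB] using M.zero_mem
        | add g g' _ _ hg hg' => simpa [hB, mul_add] using M.add_mem hg hg'
        | smul c g _ hg => simpa [hB, mul_smul_comm] using M.smul_mem c hg
      | zero => intro g hg; simpa [hB] using M.zero_mem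
      | add f f' _ _ hf hf' => intro g hg
                               simpa [hB, add_mul] using M.add_mem (hf g hg) (hf' g hg)
      | smul c f _ hf => intro g hg
                         simpa [hB, smul_mul_assoc] using M.smul_mem c (hf g hg)
    -- all products are in the closure of M
    have hP : ∀ (f : C(K, ℝ)) (g : C(Θ, ℝ)), B f g ∈ closure (M : Set C(K × Θ, ℝ)) := by
      intro f g
      exact map_mem_closure₂ hBcont (hkd f) (hld g) hspan
    -- the set of products
    set P : Set C(K × Θ, ℝ) := {h | ∃ f g, h = B f g} with hPdef
    have hPsub : P ⊆ closure (M : Set C(K × Θ, ℝ)) := by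
      rintro h ⟨f, g, rfl⟩; exact hP f g
    -- P is a submonoid
    have h1 : (1 : C(K × Θ, ℝ)) ∈ P := ⟨1, 1, by ext v; simp [hB]⟩
    have hmul : ∀ a ∈ P, ∀ b ∈ P, a * b ∈ P := by
      rintro a ⟨f, g, rfl⟩ b ⟨f', g', rfl⟩
      exact ⟨f * f', g * g', by ext v; simp [hB]; ring⟩
    set PM : Submonoid C(K × Θ, ℝ) := ⟨⟨P, fun ha hb => hmul _ ha _ hb⟩, h1⟩
    -- the algebra adjoin of P equals its span
    have hadj : Subalgebra.toSubmodule (Algebra.adjoin ℝ P) = Submodule.span ℝ P := by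
      rw [Algebra.adjoin_eq_span]
      congr 1
      exact congrArg _ (Submonoid.closure_eq PM)
    -- adjoin P separates points
    have hsep : (Algebra.adjoin ℝ P).SeparatesPoints := by
      rintro ⟨x, θ⟩ ⟨x', θ'⟩ hne
      by_cases hx : x = x'
      · have hθ : θ ≠ θ' := fun h' => hne (by rw [hx, h'])
        refine ⟨_, ⟨B 1 ⟨fun t => dist t θ, Continuous.dist continuous_id continuous_const⟩,
          Algebra.subset_adjoin ⟨_, _, rfl⟩, rfl⟩, ?_⟩
        simp [hB, sndCM, dist_eq_zero]
        exact fun h' => hθ h'.symm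
      · refine ⟨_, ⟨B ⟨fun t => dist t x, Continuous.dist continuous_id continuous_const⟩ 1,
          Algebra.subset_adjoin ⟨_, _, rfl⟩, rfl⟩, ?_⟩
        simp [hB, fstCM, dist_eq_zero]
        exact fun h' => hx h'.symm
    have hSW := ContinuousMap.subalgebra_topologicalClosure_eq_top_of_separatesPoints _ hsep
    -- finish
    intro h
    have hPspan : (Submodule.span ℝ P : Set C(K × Θ, ℝ)) ⊆ closure (M : Set C(K × Θ, ℝ)) := by
      rw [show closure (M : Set C(K × Θ, ℝ)) = (M.topologicalClosure : Set C(K × Θ, ℝ)) from rfl]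
      exact Submodule.span_le.mpr hPsub
    have : h ∈ (Algebra.adjoin ℝ P).topologicalClosure := hSW ▸ Algebra.mem_top
    have hmem : h ∈ closure ((Algebra.adjoin ℝ P : Subalgebra ℝ C(K × Θ, ℝ)) : Set C(K × Θ, ℝ)) := this
    have hsetP : ((Algebra.adjoin ℝ P : Subalgebra ℝ C(K × Θ, ℝ)) : Set C(K × Θ, ℝ))
        = (Submodule.span ℝ P : Set C(K × Θ, ℝ)) := by
      rw [← hadj]; rfl
    rw [hsetP] at hmem
    exact closure_minimal hPspan isClosed_closure hmem
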